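/- arXiv:1804.00936 — 3 statements merged into one kernel-verified Lean document; each statement's English description precedes it below -/
import Mathlib

section
/- For each κ > 0, the map t ↦ f_κ(t)/t^{1/2} is nondecreasing on (0,∞). -/
open Real Filter Set

/-- `Fk κ t = ∫₀ᵗ √(1 + 2κ s²) ds`. -/
noncomputable def Fk (κ t : ℝ) : ℝ := ∫ s in (0:ℝ)..t, Real.sqrt (1 + 2*κ*s^2)

/-- `f` is the inverse of `Fk κ` on `[0,∞)`. -/
def IsInvF (κ : ℝ) (f : ℝ → ℝ) : Prop :=
  (∀ s, 0 ≤ s → f (Fk κ s) = s) ∧ ∀ t, 0 ≤ t → 0 ≤ f t ∧ Fk κ (f t) = t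

/-- The derivative formula `f_κ'(t) = (1 + 2κ f_κ(t)²)^{-1/2}`. -/
noncomputable def fd (κ : ℝ) (f : ℝ → ℝ) (t : ℝ) : ℝ :=
  1 / Real.sqrt (1 + 2*κ*(f t)^2)

/-!
Writing `t = F(s)`, one has `f(t)/√t = (F(s)/s²)^{-1/2}` with `s = f(t)` increasing in `t`, so it
suffices that `F(s)/s²` is nonincreasing, i.e. that `s F'(s) ≤ 2 F(s)`. The difference
`2F(s) - s F'(s)` vanishes at `0` and has derivative `F'(s) - s F''(s) = 1/√(1 + 2κs²) > 0`.
-/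

section Fk

variable {κ : ℝ}

lemma hasDerivAt_Fk (s : ℝ) : HasDerivAt (Fk κ) (√(1 + 2*κ*s^2)) s :=
  have hc : Continuous fun s : ℝ => √(1 + 2*κ*s^2) := by fun_prop
  intervalIntegral.integral_hasDerivAt_right (hc.intervalIntegrable 0 s)
    hc.aestronglyMeasurable.stronglyMeasurableAtFilter hc.continuousAt

lemma Fk_zero : Fk κ 0 = 0 := by simp [Fk]

lemma strictMono_Fk (hκ : 0 ≤ κ) : StrictMono (Fk κ) :=
  strictMono_of_deriv_pos fun s => by rw [(hasDerivAt_Fk s).deriv]; positivity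

lemma Fk_pos (hκ : 0 ≤ κ) {s : ℝ} (hs : 0 < s) : 0 < Fk κ s :=
  Fk_zero (κ := κ) ▸ strictMono_Fk hκ hs

lemma hasDerivAt_mul_sqrt (hκ : 0 ≤ κ) (s : ℝ) :
    HasDerivAt (fun s : ℝ => s * √(1 + 2*κ*s^2))
      ((1 + 4*κ*s^2) / √(1 + 2*κ*s^2)) s := by
  have hg : 0 < 1 + 2*κ*s^2 := by positivity
  have hsq := Real.sq_sqrt hg.le
  have hpoly : HasDerivAt (fun s : ℝ => 1 + 2*κ*s^2) (4*κ*s) s :=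
    (((hasDerivAt_pow 2 s).const_mul (2*κ)).const_add 1).congr_deriv (by push_cast; ring)
  refine ((hasDerivAt_id' s).mul (hpoly.sqrt hg.ne')).congr_deriv ?_
  field_simp
  rw [hsq]
  ring

lemma mul_sqrt_le_two_mul_Fk (hκ : 0 ≤ κ) {s : ℝ} (hs : 0 ≤ s) :
    s * √(1 + 2*κ*s^2) ≤ 2 * Fk κ s := by
  have hderiv (u : ℝ) : HasDerivAt (fun s => 2 * Fk κ s - s * √(1 + 2*κ*s^2))
      (1 / √(1 + 2*κ*u^2)) u := by
    refine ((hasDerivAt_Fk u).const_mul 2).sub (hasDerivAt_mul_sqrt hκ u) |>.congr_deriv ?_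
    have hg : 0 < 1 + 2*κ*u^2 := by positivity
    field_simp
    rw [Real.sq_sqrt hg.le]
    ring
  have hmono : Monotone fun s => 2 * Fk κ s - s * √(1 + 2*κ*s^2) :=
    monotone_of_deriv_nonneg (fun u => (hderiv u).differentiableAt)
      fun u => by rw [(hderiv u).deriv]; positivity
  simpa [Fk_zero] using hmono hs

lemma antitoneOn_Fk_div_sq (hκ : 0 ≤ κ) : AntitoneOn (fun s => Fk κ s / s^2) (Ioi 0) := by
  have hderiv (s : ℝ) (hs : s ∈ Ioi 0) : HasDerivAt (fun s => Fk κ s / s^2)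
      ((√(1 + 2*κ*s^2) * s^2 - Fk κ s * (2*s)) / (s^2)^2) s :=
    (hasDerivAt_Fk s).div (by simpa using hasDerivAt_pow 2 s) (pow_ne_zero 2 (ne_of_gt hs))
  refine antitoneOn_of_deriv_nonpos (convex_Ioi 0)
    (fun s hs => (hderiv s hs).continuousAt.continuousWithinAt) ?_ ?_
  · rw [interior_Ioi]
    exact fun s hs => (hderiv s hs).differentiableAt.differentiableWithinAt
  · rw [interior_Ioi]
    intro s (hs : 0 < s)
    rw [(hderiv s hs).deriv]
    have key := mul_sqrt_le_two_mul_Fk hκ hs.le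
    exact div_nonpos_of_nonpos_of_nonneg (by nlinarith) (by positivity)

end Fk

namespace IsInvF

variable {κ : ℝ} {f : ℝ → ℝ}

lemma pos (hf : IsInvF κ f) {t : ℝ} (ht : 0 < t) : 0 < f t := by
  obtain ⟨hnonneg, hinv⟩ := hf.2 t ht.le
  refine hnonneg.lt_of_ne fun h => ?_
  rw [← h, Fk_zero] at hinv
  exact ht.ne hinv

lemma monotoneOn (hκ : 0 ≤ κ) (hf : IsInvF κ f) : MonotoneOn f (Ici 0) := fun a ha b hb hab =>
  (strictMono_Fk hκ).le_iff_le.1 <| by rwa [(hf.2 a ha).2, (hf.2 b hb).2]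

lemma div_sqrt_eq (hf : IsInvF κ f) {t : ℝ} (ht : 0 < t) :
    f t / √t = (√(Fk κ (f t) / f t ^ 2))⁻¹ := by
  rw [(hf.2 t ht.le).2, Real.sqrt_div' _ (sq_nonneg _), Real.sqrt_sq (hf.pos ht).le, inv_div]

end IsInvF

theorem stmt_7 (κ : ℝ) (hκ : 0 < κ) (f : ℝ → ℝ) (hf : IsInvF κ f) :
    MonotoneOn (fun t => f t / Real.sqrt t) (Set.Ioi 0) := by
  intro a (ha : 0 < a) b (hb : 0 < b) hab
  have hfb := hf.pos hb
  have hFb : 0 < Fk κ (f b) / f b ^ 2 := div_pos (Fk_pos hκ.le hfb) (by positivity)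
  simp only [hf.div_sqrt_eq ha, hf.div_sqrt_eq hb]
  exact inv_anti₀ (Real.sqrt_pos.2 hFb) <| Real.sqrt_le_sqrt <|
    antitoneOn_Fk_div_sq hκ.le (hf.pos ha) hfb (hf.monotoneOn hκ.le ha.le hb.le hab)
end

section
/- For each κ > 0, the limit of f_κ(t) f_κ'(t)/t as t → 0⁺ equals 1, and the limit of f_κ(t) f_κ'(t)/t as t → ∞ equals 0, where f_κ'(t) = (1 + 2κ f_κ(t)²)^{-1/2}. -/
open Real Filter Set

open Topology MeasureTheory

/-
Write `x = f t`, so that `t = Fk κ x`. Bounding the integrand of `Fk κ x` between `1` and its value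
at `x` gives `x ≤ t ≤ x √(1 + 2κx²)`, hence `t / (1 + 2κt²) ≤ f t · f'(t) ≤ t`, which squeezes the
ratio to `1` at `0⁺`. At infinity, `x / √(1 + 2κx²) ≤ 1 / √(2κ)` is bounded, so the ratio is `O(1/t)`.
-/

lemma continuous_sqrt_one_add_mul_sq (κ : ℝ) : Continuous fun s : ℝ => √(1 + 2 * κ * s ^ 2) := by
  fun_prop

section Fk

variable {κ : ℝ}

lemma one_le_sqrt_one_add_mul_sq (hκ : 0 ≤ κ) (s : ℝ) : 1 ≤ √(1 + 2 * κ * s ^ 2) :=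
  Real.one_le_sqrt.mpr (le_add_of_nonneg_right (by positivity))

lemma le_Fk (hκ : 0 ≤ κ) {s : ℝ} (hs : 0 ≤ s) : s ≤ Fk κ s := by
  have h := intervalIntegral.integral_mono_on hs (intervalIntegrable_const (μ := volume) (c := 1))
    ((continuous_sqrt_one_add_mul_sq κ).intervalIntegrable 0 s)
    (fun u _ => one_le_sqrt_one_add_mul_sq hκ u)
  simpa [Fk] using h

lemma Fk_le_mul_sqrt (hκ : 0 ≤ κ) {s : ℝ} (hs : 0 ≤ s) :
    Fk κ s ≤ s * √(1 + 2 * κ * s ^ 2) := by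
  have h := intervalIntegral.integral_mono_on hs
    ((continuous_sqrt_one_add_mul_sq κ).intervalIntegrable 0 s)
    (intervalIntegrable_const (μ := volume) (c := √(1 + 2 * κ * s ^ 2)))
    (fun u hu => by gcongr; exacts [hu.1, hu.2])
  simpa [Fk] using h

end Fk

namespace IsInvF

variable {κ : ℝ} {f : ℝ → ℝ} {t : ℝ}

lemma nonneg (hf : IsInvF κ f) (ht : 0 ≤ t) : 0 ≤ f t := (hf.2 t ht).1

lemma le_self (hκ : 0 ≤ κ) (hf : IsInvF κ f) (ht : 0 ≤ t) : f t ≤ t := by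
  simpa [(hf.2 t ht).2] using le_Fk hκ (hf.nonneg ht)

lemma le_mul_sqrt (hκ : 0 ≤ κ) (hf : IsInvF κ f) (ht : 0 ≤ t) :
    t ≤ f t * √(1 + 2 * κ * f t ^ 2) := by
  simpa [(hf.2 t ht).2] using Fk_le_mul_sqrt hκ (hf.nonneg ht)

lemma mul_fd_eq (f : ℝ → ℝ) (t : ℝ) :
    f t * fd κ f t = f t / √(1 + 2 * κ * f t ^ 2) := mul_one_div _ _

lemma mul_fd_le_self (hκ : 0 ≤ κ) (hf : IsInvF κ f) (ht : 0 ≤ t) : f t * fd κ f t ≤ t := by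
  rw [mul_fd_eq]
  calc f t / √(1 + 2 * κ * f t ^ 2) ≤ f t :=
        div_le_self (hf.nonneg ht) (one_le_sqrt_one_add_mul_sq hκ _)
    _ ≤ t := hf.le_self hκ ht

lemma div_one_add_le_mul_fd (hκ : 0 ≤ κ) (hf : IsInvF κ f) (ht : 0 ≤ t) :
    t / (1 + 2 * κ * t ^ 2) ≤ f t * fd κ f t := by
  have hA2 : √(1 + 2 * κ * f t ^ 2) ^ 2 = 1 + 2 * κ * f t ^ 2 := Real.sq_sqrt (by positivity)
  have hxt : 1 + 2 * κ * f t ^ 2 ≤ 1 + 2 * κ * t ^ 2 := by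
    gcongr
    exacts [hf.nonneg ht, hf.le_self hκ ht]
  rw [mul_fd_eq]
  calc t / (1 + 2 * κ * t ^ 2) ≤ t / √(1 + 2 * κ * f t ^ 2) ^ 2 := by
        rw [hA2]
        exact div_le_div_of_nonneg_left ht (by positivity) hxt
    _ ≤ f t * √(1 + 2 * κ * f t ^ 2) / √(1 + 2 * κ * f t ^ 2) ^ 2 := by
        gcongr
        exact hf.le_mul_sqrt hκ ht
    _ = f t / √(1 + 2 * κ * f t ^ 2) := by
        field_simp

lemma mul_fd_le (hκ : 0 < κ) (hf : IsInvF κ f) (ht : 0 ≤ t) :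
    f t * fd κ f t ≤ 1 / √(2 * κ) := by
  have hx := hf.nonneg ht
  have hsqrt : f t * √(2 * κ) = √(2 * κ * f t ^ 2) := by
    rw [mul_comm (2 * κ), Real.sqrt_mul (sq_nonneg _), Real.sqrt_sq hx]
  rw [mul_fd_eq, div_le_div_iff₀ (by positivity) (by positivity), one_mul, hsqrt]
  exact Real.sqrt_le_sqrt (by linarith)

end IsInvF

theorem stmt_9 (κ : ℝ) (hκ : 0 < κ) (f : ℝ → ℝ) (hf : IsInvF κ f) :
    Filter.Tendsto (fun t => f t * fd κ f t / t) (nhdsWithin 0 (Set.Ioi 0)) (nhds 1) ∧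
    Filter.Tendsto (fun t => f t * fd κ f t / t) Filter.atTop (nhds 0) := by
  constructor
  · have hlow : Tendsto (fun t : ℝ => 1 / (1 + 2 * κ * t ^ 2)) (𝓝[>] 0) (𝓝 1) := by
      have hc : Continuous fun t : ℝ => 1 / (1 + 2 * κ * t ^ 2) :=
        continuous_const.div (by fun_prop) (fun t => by positivity)
      simpa using hc.continuousWithinAt.tendsto (x := 0) (s := Ioi 0)
    refine tendsto_of_tendsto_of_tendsto_of_le_of_le' hlow tendsto_const_nhds ?_ ?_
    all_goals filter_upwards [self_mem_nhdsWithin] with t (ht : 0 < t)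
    · rw [le_div_iff₀ ht, one_div_mul_eq_div]
      exact hf.div_one_add_le_mul_fd hκ.le ht.le
    · exact (div_le_one ht).mpr (hf.mul_fd_le_self hκ.le ht.le)
  · refine tendsto_of_tendsto_of_tendsto_of_le_of_le' tendsto_const_nhds
      ((tendsto_const_nhds (x := 1 / √(2 * κ))).div_atTop tendsto_id) ?_ ?_
    all_goals filter_upwards [eventually_gt_atTop 0] with t ht
    · exact div_nonneg (mul_nonneg (hf.nonneg ht.le) (by unfold fd; positivity)) ht.le
    · exact div_le_div_of_nonneg_right (hf.mul_fd_le hκ ht.le) ht.le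
end

section
/- Let p > 1 and g(t) = f₁(t)^{p+1}/t. Then g(t) ≥ g(1) · t^{(p-1)/2} for all t ≥ 1. -/
open Real Filter Set

/-! The substitution `s = c u` gives `Fk κ (c x) = c ∫₀ˣ √(1 + 2κ c² u²) du`, and
`√(1 + 2κ c² u²) ≤ c √(1 + 2κ u²)` once `c ≥ 1`. Hence `Fk κ (c x) ≤ c² Fk κ x`, which for the
inverse function reads `c f(t) ≤ f(c² t)`; with `c = √t` this is `f₁ t ≥ √t f₁ 1`, and raising to
the power `p + 1` gives the claim. -/

lemma continuous_sqrt_one_add_two_mul_sq (κ : ℝ) :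
    Continuous fun s : ℝ => √(1 + 2*κ*s^2) := by
  fun_prop

lemma Fk_strictMono {κ : ℝ} (hκ : 0 ≤ κ) : StrictMono (Fk κ) := by
  intro x y hxy
  have hint := (continuous_sqrt_one_add_two_mul_sq κ).intervalIntegrable (μ := MeasureTheory.volume)
  rw [← sub_pos, Fk, Fk, intervalIntegral.integral_interval_sub_left (hint 0 y) (hint 0 x)]
  exact intervalIntegral.intervalIntegral_pos_of_pos_on (hint x y)
    (fun s _ => Real.sqrt_pos.mpr (by positivity)) hxy

lemma sqrt_one_add_two_mul_sq_mul_le (κ : ℝ) {c : ℝ} (hc : 1 ≤ c) (u : ℝ) :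
    √(1 + 2*κ*(c*u)^2) ≤ c * √(1 + 2*κ*u^2) := by
  calc √(1 + 2*κ*(c*u)^2) ≤ √(c^2 * (1 + 2*κ*u^2)) :=
        Real.sqrt_le_sqrt (by nlinarith)
    _ = c * √(1 + 2*κ*u^2) := by
        rw [Real.sqrt_mul (by positivity), Real.sqrt_sq (by linarith)]

lemma Fk_mul_le (κ : ℝ) {c x : ℝ} (hc : 1 ≤ c) (hx : 0 ≤ x) :
    Fk κ (c * x) ≤ c^2 * Fk κ x := by
  have hint := (continuous_sqrt_one_add_two_mul_sq κ).intervalIntegrable (μ := MeasureTheory.volume)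
  have hsubst : Fk κ (c * x) = c * ∫ u in (0:ℝ)..x, √(1 + 2*κ*(c*u)^2) := by
    simpa [Fk] using
      (intervalIntegral.smul_integral_comp_mul_left (fun s => √(1 + 2*κ*s^2)) c
        (a := 0) (b := x)).symm
  rw [hsubst, Fk, sq, mul_assoc]
  refine mul_le_mul_of_nonneg_left ?_ (zero_le_one.trans hc)
  rw [← intervalIntegral.integral_const_mul]
  exact intervalIntegral.integral_mono_on hx
    (((continuous_sqrt_one_add_two_mul_sq κ).comp (continuous_const_mul c)).intervalIntegrable _ _)
    ((hint 0 x).const_mul c) fun u _ => sqrt_one_add_two_mul_sq_mul_le κ hc u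

lemma IsInvF.mul_le_apply_sq_mul {κ : ℝ} {f : ℝ → ℝ} (hf : IsInvF κ f) (hκ : 0 ≤ κ)
    {c t : ℝ} (hc : 1 ≤ c) (ht : 0 ≤ t) : c * f t ≤ f (c^2 * t) := by
  obtain ⟨hft, hFft⟩ := hf.2 t ht
  rw [← (Fk_strictMono hκ).le_iff_le, (hf.2 _ (by positivity)).2]
  calc Fk κ (c * f t) ≤ c^2 * Fk κ (f t) := Fk_mul_le κ hc hft
    _ = c^2 * t := by rw [hFft]

theorem stmt_15 (p : ℝ) (hp : 1 < p) (f₁ : ℝ → ℝ) (hf₁ : IsInvF 1 f₁) :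
    ∀ t, 1 ≤ t →
      ((f₁ 1) ^ (p + 1) / 1) * t ^ ((p - 1) / 2) ≤ (f₁ t) ^ (p + 1) / t := by
  intro t ht
  have ht0 : 0 < t := zero_lt_one.trans_le ht
  have hf₁1 : 0 ≤ f₁ 1 := (hf₁.2 1 zero_le_one).1
  have hgrowth : √t * f₁ 1 ≤ f₁ t := by
    simpa [Real.sq_sqrt ht0.le] using
      hf₁.mul_le_apply_sq_mul zero_le_one (Real.one_le_sqrt.mpr ht) zero_le_one
  calc f₁ 1 ^ (p + 1) / 1 * t ^ ((p - 1) / 2) = (√t * f₁ 1) ^ (p + 1) / t := by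
        rw [Real.mul_rpow (Real.sqrt_nonneg t) hf₁1, ← Real.rpow_div_two_eq_sqrt _ ht0.le,
          show (p - 1) / 2 = (p + 1) / 2 - 1 by ring, Real.rpow_sub_one ht0.ne']
        ring
    _ ≤ f₁ t ^ (p + 1) / t := by gcongr
end
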